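/- arXiv:1503.04330 — 5 statements merged into one kernel-verified Lean document; each statement's English description precedes it below -/
import Mathlib

section
/- Every smooth (C^∞) function f : C_0(V) × C_1(V) × ⋯ × C_r(V) → ℝ that is invariant under the diagonal action of GL(V) is constant. -/
open scoped BigOperators

/-- The space `C_m(V)` of normal tensors of order `m`: `(m+2)`-multilinear maps
`T : V^{m+2} → V` that are symmetric in their last `m` arguments and whose total
symmetrization vanishes. -/
def NormalTensor (V : Type*) [NormedAddCommGroup V] [NormedSpace ℝ V] (m : ℕ) :
    Submodule ℝ (ContinuousMultilinearMap ℝ (fun _ : Fin (m + 2) => V) V) where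
  carrier := {T |
    (∀ (v : Fin (m + 2) → V) (σ : Equiv.Perm (Fin (m + 2))),
        (∀ i : Fin (m + 2), (i : ℕ) < 2 → σ i = i) → T (fun i => v (σ i)) = T v) ∧
    (∀ v : Fin (m + 2) → V,
        ∑ σ : Equiv.Perm (Fin (m + 2)), T (fun i => v (σ i)) = 0)}
  add_mem' := by
    rintro a b ⟨ha1, ha2⟩ ⟨hb1, hb2⟩
    refine ⟨fun v σ hσ => ?_, fun v => ?_⟩
    · simp [ha1 v σ hσ, hb1 v σ hσ]
    · simp [Finset.sum_add_distrib, ha2 v, hb2 v]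
  zero_mem' := by
    refine ⟨fun v σ hσ => ?_, fun v => ?_⟩ <;> simp
  smul_mem' := by
    rintro c a ⟨ha1, ha2⟩
    refine ⟨fun v σ hσ => ?_, fun v => ?_⟩
    · simp [ha1 v σ hσ]
    · simp [← Finset.smul_sum, ha2 v]

theorem ContinuousMultilinearMap.inv_smul_map_smul {𝕜 E F : Type*} [Field 𝕜] [AddCommGroup E]
    [Module 𝕜 E] [TopologicalSpace E] [AddCommGroup F] [Module 𝕜 F] [TopologicalSpace F] {n : ℕ}
    (T : ContinuousMultilinearMap 𝕜 (fun _ : Fin (n + 1) => E) F) {t : 𝕜} (ht : t ≠ 0)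
    (v : Fin (n + 1) → E) :
    t⁻¹ • T (fun i => t • v i) = t ^ n • T v := by
  rw [T.map_smul_univ, Finset.prod_const, Finset.card_univ, Fintype.card_fin, smul_smul, pow_succ',
    inv_mul_cancel_left₀ ht]

theorem smooth_invariant_function_on_normal_tensors_is_constant_general
    {V : Type*} [NormedAddCommGroup V] [NormedSpace ℝ V]
    (r : ℕ)
    (f : (∀ m : Fin (r + 1), NormalTensor V m) → ℝ)
    (hf : @ContDiff ℝ _ _ _ Pi.normedSpace _ _ _ ⊤ f)
    (hinv : ∀ (g : V ≃ₗ[ℝ] V) (T T' : ∀ m : Fin (r + 1), NormalTensor V m),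
      (∀ (m : Fin (r + 1)) (v : Fin ((m : ℕ) + 2) → V),
          (T' m).1 v = g ((T m).1 fun i => g.symm (v i))) →
      f T' = f T) :
    ∃ c : ℝ, ∀ T, f T = c := by
  let _ : NormedSpace ℝ (∀ m : Fin (r + 1), NormalTensor V m) := Pi.normedSpace
  refine ⟨f 0, fun T => ?_⟩
  -- the homothety `t⁻¹ • id` of `V` rescales the component `T m` by `t ^ (m + 1)`
  let dilate : ℝ → ∀ m : Fin (r + 1), NormalTensor V m := fun t m => t ^ ((m : ℕ) + 1) • T m
  have hdilate : Continuous dilate :=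
    continuous_pi fun m => (continuous_pow _).smul continuous_const
  have hf_dilate : ∀ t ≠ (0 : ℝ), f (dilate t) = f T := fun t ht =>
    hinv (LinearEquiv.smulOfNeZero ℝ V t⁻¹ (inv_ne_zero ht)) T (dilate t) fun m v => by
      simp only [LinearEquiv.smulOfNeZero_apply, LinearEquiv.smulOfNeZero_symm_apply,
        Units.smul_def, Units.val_inv_eq_inv_val, Units.val_mk0, inv_inv]
      exact ((T m).1.inv_smul_map_smul (n := (m : ℕ) + 1) ht v).symm
  have hdilate_zero : dilate 0 = 0 := funext fun m => by simp [dilate]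
  have hf_zero := congrFun ((hf.continuous.comp hdilate).ext_on (dense_compl_singleton 0)
    continuous_const hf_dilate) 0
  rw [Function.comp_apply, hdilate_zero] at hf_zero
  exact hf_zero.symm

set_option synthInstance.maxHeartbeats 800000 in
set_option maxHeartbeats 4000000 in
/-- Every smooth function on `C_0(V) × ⋯ × C_r(V)` invariant under the diagonal
action of `GL(V)` is constant. -/
theorem smooth_invariant_function_on_normal_tensors_is_constant
    {V : Type*} [NormedAddCommGroup V] [NormedSpace ℝ V] [FiniteDimensional ℝ V]
    (r : ℕ)
    (f : (∀ m : Fin (r + 1), NormalTensor V m) → ℝ)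
    (hf : @ContDiff ℝ _ _ _ Pi.normedSpace _ _ _ ⊤ f)
    (hinv : ∀ (g : V ≃ₗ[ℝ] V) (T T' : ∀ m : Fin (r + 1), NormalTensor V m),
      (∀ (m : Fin (r + 1)) (v : Fin ((m : ℕ) + 2) → V),
          (T' m).1 v = g ((T m).1 fun i => g.symm (v i))) →
      f T' = f T) :
    ∃ c : ℝ, ∀ T, f T = c :=
  smooth_invariant_function_on_normal_tensors_is_constant_general r f hf hinv
end

section
/- Every GL(V)-invariant polynomial function P : C_0(V) × C_1(V) × ⋯ × C_r(V) → ℝ (i.e., a function given by evaluating a multivariate polynomial in the linear coordinates associated to some basis of this finite-dimensional space) is constant. -/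
/-!
The homothety `v ↦ s⁻¹ • v` acts on `C_m(V)` as multiplication by `s ^ (m + 1)`, so an invariant
function takes the same value at `T` and at `(s ^ (m + 1) • T m)ₘ` for every `s ≠ 0`. A polynomial
function is continuous, and since every weight `m + 1` is positive, letting `s → 0` shows that its
value at `T` equals its value at `0`.
-/

open scoped BigOperators

theorem Module.Basis.continuous_eval_repr {ι 𝕜 E : Type*} [Fintype ι]
    [NontriviallyNormedField 𝕜] [CompleteSpace 𝕜] [AddCommGroup E] [Module 𝕜 E]
    [TopologicalSpace E] [IsTopologicalAddGroup E] [ContinuousSMul 𝕜 E] [T2Space E]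
    (b : Module.Basis ι 𝕜 E) (p : MvPolynomial ι 𝕜) :
    Continuous fun x => MvPolynomial.eval (fun i => b.repr x i) p :=
  p.continuous_eval.comp b.equivFunL.continuous

theorem ContinuousMultilinearMap.inv_smul_apply_smul {𝕜 M N : Type*} [Field 𝕜]
    [AddCommGroup M] [Module 𝕜 M] [TopologicalSpace M]
    [AddCommGroup N] [Module 𝕜 N] [TopologicalSpace N] {n : ℕ}
    (f : ContinuousMultilinearMap 𝕜 (fun _ : Fin (n + 1) => M) N) {s : 𝕜} (hs : s ≠ 0)
    (v : Fin (n + 1) → M) :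
    s⁻¹ • f (fun i => s • v i) = s ^ n • f v := by
  rw [f.map_smul_univ, Finset.prod_const, Finset.card_univ, Fintype.card_fin, smul_smul,
    pow_succ', inv_mul_cancel_left₀ hs]

theorem NormalTensor.apply_pow_succ_smul_eq_of_invariant {V : Type*} [NormedAddCommGroup V]
    [NormedSpace ℝ V] {r : ℕ} {P : (∀ m : Fin (r + 1), NormalTensor V m) → ℝ}
    (hinv : ∀ (g : V ≃ₗ[ℝ] V) (T T' : ∀ m : Fin (r + 1), NormalTensor V m),
      (∀ (m : Fin (r + 1)) (v : Fin ((m : ℕ) + 2) → V),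
          (T' m).1 v = g ((T m).1 fun i => g.symm (v i))) →
      P T' = P T)
    (T : ∀ m : Fin (r + 1), NormalTensor V m) {s : ℝ} (hs : s ≠ 0) :
    P (fun m => s ^ ((m : ℕ) + 1) • T m) = P T := by
  refine hinv (LinearEquiv.smulOfNeZero ℝ V s⁻¹ (inv_ne_zero hs)) T _ fun m v => ?_
  simp only [LinearEquiv.smulOfNeZero_apply, LinearEquiv.smulOfNeZero_symm_apply, Units.smul_def,
    Units.val_inv_eq_inv_val, Units.val_mk0, inv_inv]
  exact ((T m).1.inv_smul_apply_smul hs v).symm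

theorem polynomial_invariant_function_on_normal_tensors_is_constant_general
    {V : Type*} [NormedAddCommGroup V] [NormedSpace ℝ V]
    (r : ℕ)
    (P : (∀ m : Fin (r + 1), NormalTensor V m) → ℝ)
    (hP : ∃ (ι : Type) (_ : Fintype ι)
        (b : Module.Basis ι ℝ (∀ m : Fin (r + 1), NormalTensor V m))
        (p : MvPolynomial ι ℝ),
        ∀ T, P T = MvPolynomial.eval (fun i => b.repr T i) p)
    (hinv : ∀ (g : V ≃ₗ[ℝ] V) (T T' : ∀ m : Fin (r + 1), NormalTensor V m),
      (∀ (m : Fin (r + 1)) (v : Fin ((m : ℕ) + 2) → V),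
          (T' m).1 v = g ((T m).1 fun i => g.symm (v i))) →
      P T' = P T) :
    ∃ c : ℝ, ∀ T, P T = c := by
  obtain ⟨ι, _, b, p, hp⟩ := hP
  have hP_cont : Continuous P := funext hp ▸ b.continuous_eval_repr p
  refine ⟨P 0, fun T => ?_⟩
  have h_curve : Continuous fun s : ℝ => P (fun m => s ^ ((m : ℕ) + 1) • T m) :=
    hP_cont.comp <| continuous_pi fun m => (continuous_pow _).smul continuous_const
  have h_const := h_curve.ext_on (dense_compl_singleton 0) continuous_const
    fun s hs => NormalTensor.apply_pow_succ_smul_eq_of_invariant hinv T hs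
  simpa [← Pi.zero_def] using (congrFun h_const 0).symm

set_option synthInstance.maxHeartbeats 800000 in
set_option maxHeartbeats 4000000 in
/-- Every `GL(V)`-invariant polynomial function on `C_0(V) × ⋯ × C_r(V)` — i.e. a
function given by evaluating a multivariate polynomial in the linear coordinates
associated to some basis of this finite-dimensional space — is constant. -/
theorem polynomial_invariant_function_on_normal_tensors_is_constant
    {V : Type*} [NormedAddCommGroup V] [NormedSpace ℝ V] [FiniteDimensional ℝ V]
    (r : ℕ)
    (P : (∀ m : Fin (r + 1), NormalTensor V m) → ℝ)
    (hP : ∃ (ι : Type) (_ : Fintype ι)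
        (b : Module.Basis ι ℝ (∀ m : Fin (r + 1), NormalTensor V m))
        (p : MvPolynomial ι ℝ),
        ∀ T, P T = MvPolynomial.eval (fun i => b.repr T i) p)
    (hinv : ∀ (g : V ≃ₗ[ℝ] V) (T T' : ∀ m : Fin (r + 1), NormalTensor V m),
      (∀ (m : Fin (r + 1)) (v : Fin ((m : ℕ) + 2) → V),
          (T' m).1 v = g ((T m).1 fun i => g.symm (v i))) →
      P T' = P T) :
    ∃ c : ℝ, ∀ T, P T = c :=
  polynomial_invariant_function_on_normal_tensors_is_constant_general r P hP hinv
end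

section
/- Let V be a finite-dimensional real vector space. The linear map Φ : C̃_1(V) → (trilinear maps V³ → V) defined by Φ(Γ)(x, y, z) := Γ(y, z, x) − Γ(x, z, y) takes values in the space R(V) of curvature-like tensors (i.e., Φ(Γ) is antisymmetric in its first two arguments and satisfies the Bianchi identity), and it is a linear isomorphism from C̃_1(V) onto R(V), whose inverse is given by R ↦ Γ with Γ(x, y, z) := (1/3)(R(z, x, y) + R(z, y, x)). -/
variable (V : Type*) [AddCommGroup V] [Module ℝ V]

/-- `C̃_1(V)`: trilinear maps `Γ : V³ → V` symmetric in their first two arguments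
whose total symmetrization over `S_3` vanishes. -/
def CTildeOne : Submodule ℝ (V →ₗ[ℝ] V →ₗ[ℝ] V →ₗ[ℝ] V) where
  carrier := {Γ | (∀ x y z : V, Γ x y z = Γ y x z) ∧
    (∀ x y z : V,
      Γ x y z + Γ x z y + Γ y x z + Γ y z x + Γ z x y + Γ z y x = 0)}
  add_mem' := by
    rintro a b ⟨ha1, ha2⟩ ⟨hb1, hb2⟩
    refine ⟨fun x y z => by simp [ha1 x y z, hb1 x y z], fun x y z => ?_⟩
    have h := congrArg₂ (· + ·) (ha2 x y z) (hb2 x y z)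
    simp only [add_zero] at h
    simp only [LinearMap.add_apply]
    rw [← h]; abel
  zero_mem' := by
    refine ⟨fun x y z => ?_, fun x y z => ?_⟩ <;> simp
  smul_mem' := by
    rintro c a ⟨ha1, ha2⟩
    refine ⟨fun x y z => by simp [ha1 x y z], fun x y z => ?_⟩
    simp only [LinearMap.smul_apply, ← smul_add]
    rw [ha2 x y z, smul_zero]

/-- `R(V)`: curvature-like tensors, i.e. trilinear maps `R : V³ → V` antisymmetric in
their first two arguments and satisfying the linear Bianchi identity. -/
def CurvLike : Submodule ℝ (V →ₗ[ℝ] V →ₗ[ℝ] V →ₗ[ℝ] V) where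
  carrier := {R | (∀ x y z : V, R x y z = - R y x z) ∧
    (∀ x y z : V, R x y z + R z x y + R y z x = 0)}
  add_mem' := by
    rintro a b ⟨ha1, ha2⟩ ⟨hb1, hb2⟩
    refine ⟨fun x y z => ?_, fun x y z => ?_⟩
    · simp only [LinearMap.add_apply]
      rw [ha1 x y z, hb1 x y z]; abel
    · have h := congrArg₂ (· + ·) (ha2 x y z) (hb2 x y z)
      simp only [add_zero] at h
      simp only [LinearMap.add_apply]
      rw [← h]; abel
  zero_mem' := by
    refine ⟨fun x y z => ?_, fun x y z => ?_⟩ <;> simp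
  smul_mem' := by
    rintro c a ⟨ha1, ha2⟩
    refine ⟨fun x y z => ?_, fun x y z => ?_⟩
    · simp only [LinearMap.smul_apply]
      rw [ha1 x y z, smul_neg]
    · simp only [LinearMap.smul_apply, ← smul_add]
      rw [ha2 x y z, smul_zero]

/-! With `Φ = curvOfNormal` and `Ψ = normalOfCurv`, both `Ψ ∘ Φ = id` on `C̃_1(V)` and
`Φ ∘ Ψ = id` on `R(V)` are linear consequences of the defining identities evaluated at the
permutations of `(x, y, z)`: e.g.
`3 Ψ(Φ Γ)(x,y,z) = Γ(x,y,z) + Γ(y,x,z) - Γ(z,x,y) - Γ(z,y,x)`, which equals `3 Γ(x,y,z)`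
once the vanishing `S_3`-symmetrization is combined with the symmetry of `Γ`. -/

local notation "T" => V →ₗ[ℝ] V →ₗ[ℝ] V →ₗ[ℝ] V

noncomputable def swapFirst : T →ₗ[ℝ] T := (LinearMap.lflip (R₀ := ℝ)).toLinearMap

noncomputable def swapLast : T →ₗ[ℝ] T :=
  LinearMap.llcomp ℝ V _ _ (LinearMap.lflip (R₀ := ℝ)).toLinearMap

noncomputable def curvOfNormal : T →ₗ[ℝ] T where
  toFun Γ := swapFirst V (swapLast V Γ) - swapLast V Γ
  map_add' Γ Γ' := by ext; simp; abel
  map_smul' c Γ := by ext; simp [smul_sub]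

noncomputable def normalOfCurv : T →ₗ[ℝ] T :=
  (3 : ℝ)⁻¹ • (swapLast V ∘ₗ swapFirst V + swapFirst V ∘ₗ swapLast V ∘ₗ swapFirst V)

section

variable {V}

@[simp]
theorem swapFirst_apply (Γ : T) (x y z : V) : swapFirst V Γ x y z = Γ y x z := rfl

@[simp]
theorem swapLast_apply (Γ : T) (x y z : V) : swapLast V Γ x y z = Γ x z y := rfl

@[simp]
theorem curvOfNormal_apply (Γ : T) (x y z : V) :
    curvOfNormal V Γ x y z = Γ y z x - Γ x z y := by
  simp [curvOfNormal]

@[simp]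
theorem normalOfCurv_apply (R : T) (x y z : V) :
    normalOfCurv V R x y z = (3 : ℝ)⁻¹ • (R z x y + R z y x) := by
  simp [normalOfCurv]

theorem curvOfNormal_mem_curvLike {Γ : T} (hΓ : ∀ x y z, Γ x y z = Γ y x z) :
    curvOfNormal V Γ ∈ CurvLike V := by
  refine ⟨fun x y z => ?_, fun x y z => ?_⟩
  · simp only [curvOfNormal_apply]; abel
  · simp only [curvOfNormal_apply]
    linear_combination (norm := module) hΓ z x y - hΓ z y x - hΓ y x z

theorem normalOfCurv_mem_cTildeOne {R : T} (hR : ∀ x y z, R x y z = -R y x z) :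
    normalOfCurv V R ∈ CTildeOne V := by
  refine ⟨fun x y z => ?_, fun x y z => ?_⟩
  · simp only [normalOfCurv_apply, add_comm]
  · simp only [normalOfCurv_apply]
    linear_combination (norm := module) (2 / 3 : ℝ) • (hR x y z + hR x z y + hR y z x)

theorem normalOfCurv_curvOfNormal {Γ : T} (hΓ : Γ ∈ CTildeOne V) :
    normalOfCurv V (curvOfNormal V Γ) = Γ := by
  obtain ⟨hsymm, hsum⟩ := hΓ
  ext x y z
  simp only [normalOfCurv_apply, curvOfNormal_apply]
  linear_combination (norm := module)
    (2⁻¹ : ℝ) • hsymm y x z - (6⁻¹ : ℝ) • (hsymm z y x + hsymm z x y + hsum x y z)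

theorem curvOfNormal_normalOfCurv {R : T} (hR : R ∈ CurvLike V) :
    curvOfNormal V (normalOfCurv V R) = R := by
  obtain ⟨hanti, hbianchi⟩ := hR
  ext x y z
  simp only [curvOfNormal_apply, normalOfCurv_apply]
  linear_combination (norm := module)
    (3⁻¹ : ℝ) • (hanti x z y - hanti x y z - hbianchi x y z)

end

noncomputable def cTildeOneEquivCurvLike : CTildeOne V ≃ₗ[ℝ] CurvLike V :=
  LinearEquiv.ofLinearMap
    ((curvOfNormal V).restrict fun _ hΓ => curvOfNormal_mem_curvLike hΓ.1)
    ((normalOfCurv V).restrict fun _ hR => normalOfCurv_mem_cTildeOne hR.1)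
    (LinearMap.ext fun R => Subtype.ext (curvOfNormal_normalOfCurv R.2))
    (LinearMap.ext fun Γ => Subtype.ext (normalOfCurv_curvOfNormal Γ.2))

theorem ctildeOne_equiv_curvLike_general
    (V : Type*) [AddCommGroup V] [Module ℝ V] :
    ∃ e : CTildeOne V ≃ₗ[ℝ] CurvLike V,
      (∀ (Γ : CTildeOne V) (x y z : V),
          (e Γ).1 x y z = Γ.1 y z x - Γ.1 x z y) ∧
      (∀ (R : CurvLike V) (x y z : V),
          (e.symm R).1 x y z = (3 : ℝ)⁻¹ • (R.1 z x y + R.1 z y x)) :=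
  ⟨cTildeOneEquivCurvLike V, fun Γ => curvOfNormal_apply Γ.1, fun R => normalOfCurv_apply R.1⟩

/-- The map `Φ(Γ)(x,y,z) = Γ(y,z,x) − Γ(x,z,y)` is a linear isomorphism from
`C̃_1(V)` onto the space `R(V)` of curvature-like tensors, with inverse
`R ↦ Γ`, `Γ(x,y,z) = (1/3)(R(z,x,y) + R(z,y,x))`. -/
theorem ctildeOne_equiv_curvLike
    (V : Type*) [AddCommGroup V] [Module ℝ V] [FiniteDimensional ℝ V] :
    ∃ e : CTildeOne V ≃ₗ[ℝ] CurvLike V,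
      (∀ (Γ : CTildeOne V) (x y z : V),
          (e Γ).1 x y z = Γ.1 y z x - Γ.1 x z y) ∧
      (∀ (R : CurvLike V) (x y z : V),
          (e.symm R).1 x y z = (3 : ℝ)⁻¹ • (R.1 z x y + R.1 z y x)) :=
  ctildeOne_equiv_curvLike_general V
end

section
/- Let U ⊆ ℝⁿ be an open neighbourhood of 0 and let Γ_{ij}^k : U → ℝ (for i, j, k ∈ {1,…,n}) be smooth functions satisfying Σ_{i,j=1}^n x_i x_j Γ_{ij}^k(x) = 0 for all x ∈ U and all k. Then for every m ≥ 0, every k, and every choice of indices a_1, …, a_{m+2} ∈ {1,…,n}, the full symmetrization of the m-th order partial derivatives at the origin vanishes: Σ_{σ ∈ S_{m+2}} (∂_{a_{σ(3)}} ⋯ ∂_{a_{σ(m+2)}} Γ^k_{a_{σ(1)} a_{σ(2)}})(0) = 0. -/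
open scoped BigOperators

open scoped ContDiff

section aux
variable {E F : Type*} [NormedAddCommGroup E] [NormedSpace ℝ E]
  [NormedAddCommGroup F] [NormedSpace ℝ F]

lemma aux_iteratedFDeriv_congr_nhds {f g : E → F} {x : E} (h : f =ᶠ[nhds x] g) (p : ℕ) :
    iteratedFDeriv ℝ p f x = iteratedFDeriv ℝ p g x := by
  rw [← iteratedFDerivWithin_univ, ← iteratedFDerivWithin_univ]
  exact Filter.EventuallyEq.iteratedFDerivWithin_eq (by rwa [nhdsWithin_univ]) h.self_of_nhds p

lemma aux_iteratedFDeriv_zero_of_eventually {f : E → F} {x : E}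
    (h : f =ᶠ[nhds x] fun _ => 0) (p : ℕ) : iteratedFDeriv ℝ p f x = 0 := by
  rw [aux_iteratedFDeriv_congr_nhds h p, iteratedFDeriv_zero_fun]; rfl
end aux

lemma aux_collapse {n N : ℕ} (a : Fin N → Fin n) (t : Fin N → ℝ) (F : Fin n → ℝ) :
    ∑ i, (∑ r, if a r = i then t r else 0) * F i = ∑ r, t r * F (a r) := by
  classical
  simp only [Finset.sum_mul, ite_mul, zero_mul]
  rw [Finset.sum_comm]
  refine Finset.sum_congr rfl fun r _ => ?_
  simpa using Finset.sum_ite_eq Finset.univ (a r) fun i => t r * F i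

lemma aux_collapse2 {n N : ℕ} (a : Fin N → Fin n) (t : Fin N → ℝ) (g : Fin n → Fin n → ℝ)
    (v : Fin n → ℝ) (hv : v = ∑ r, t r • (Pi.single (a r) (1:ℝ) : Fin n → ℝ)) :
    ∑ i, ∑ j, v i * v j * g i j = ∑ r, ∑ s, (t r * t s) * g (a r) (a s) := by
  classical
  have hvi : ∀ i, v i = ∑ r, if a r = i then t r else 0 := by
    intro i
    rw [hv, Finset.sum_apply]
    refine Finset.sum_congr rfl fun r _ => ?_
    simp [Pi.single_apply, eq_comm]
  calc ∑ i, ∑ j, v i * v j * g i j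
      = ∑ i, (∑ r, if a r = i then t r else 0) * ∑ j, v j * g i j := by
        refine Finset.sum_congr rfl fun i _ => ?_
        rw [← hvi, Finset.mul_sum]
        exact Finset.sum_congr rfl fun j _ => (mul_assoc _ _ _)
    _ = ∑ r, t r * ∑ j, v j * g (a r) j := aux_collapse a t _
    _ = ∑ r, t r * ∑ s, t s * g (a r) (a s) := by
        refine Finset.sum_congr rfl fun r _ => ?_
        congr 1
        calc ∑ j, v j * g (a r) j
            = ∑ j, (∑ s, if a s = j then t s else 0) * g (a r) j := by
              simp only [hvi]
          _ = ∑ s, t s * g (a r) (a s) := aux_collapse a t _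
    _ = ∑ r, ∑ s, (t r * t s) * g (a r) (a s) := by
        refine Finset.sum_congr rfl fun r _ => ?_
        rw [Finset.mul_sum]
        exact Finset.sum_congr rfl fun s _ => (mul_assoc _ _ _).symm

lemma aux_perm_sum {N : ℕ} (Φ : (Fin N → Fin N) → ℝ)
    (h : ∀ t : Fin N → ℝ, ∑ b : Fin N → Fin N, (∏ i, t (b i)) * Φ b = 0) :
    ∑ σ : Equiv.Perm (Fin N), Φ ⇑σ = 0 := by
  classical
  set u₀ : Fin N →₀ ℕ := ∑ i : Fin N, Finsupp.single i 1 with hu₀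
  let P : MvPolynomial (Fin N) ℝ :=
    ∑ b : Fin N → Fin N, MvPolynomial.monomial (∑ i, Finsupp.single (b i) 1) (Φ b)
  have hev : ∀ t : Fin N → ℝ, MvPolynomial.eval t P = ∑ b : Fin N → Fin N, (∏ i, t (b i)) * Φ b := by
    intro t
    simp only [P, map_sum, MvPolynomial.eval_monomial]
    refine Finset.sum_congr rfl fun b _ => ?_
    rw [← Finsupp.prod_finset_sum_index (fun a => pow_zero _) (fun a b₁ b₂ => pow_add _ _ _)]
    simp only [Finsupp.prod_single_index, pow_zero, pow_one]
    rw [mul_comm]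
  have hP : P = 0 := MvPolynomial.funext fun t => by rw [hev, h t]; simp
  have hkey : ∀ b : Fin N → Fin N,
      ((∑ i, Finsupp.single (b i) 1 = u₀) ↔ Function.Bijective b) := by
    intro b
    constructor
    · intro hb
      rw [Function.bijective_iff_existsUnique]
      intro j
      have h1 : (∑ i, Finsupp.single (b i) 1) j = u₀ j := by rw [hb]
      rw [Finsupp.finset_sum_apply, Finsupp.finset_sum_apply] at h1
      simp only [Finsupp.single_apply] at h1
      have hL : (∑ i : Fin N, if b i = j then (1:ℕ) else 0)
          = (Finset.univ.filter fun i => b i = j).card := (Finset.card_filter _ _).symm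
      have hR : (∑ i : Fin N, if i = j then (1:ℕ) else 0) = 1 := by
        rw [Finset.sum_ite_eq']; simp
      rw [hL, hR] at h1
      obtain ⟨i, hi⟩ := Finset.card_eq_one.mp h1
      refine ⟨i, ?_, ?_⟩
      · have : i ∈ Finset.univ.filter fun i => b i = j := hi ▸ Finset.mem_singleton_self i
        exact (Finset.mem_filter.mp this).2
      · intro i' hi'
        have : i' ∈ Finset.univ.filter fun i => b i = j :=
          Finset.mem_filter.mpr ⟨Finset.mem_univ _, hi'⟩
        rw [hi, Finset.mem_singleton] at this
        exact this
    · intro hb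
      exact Fintype.sum_bijective b hb _ _ (fun i => rfl)
  have hc : MvPolynomial.coeff u₀ P = 0 := by rw [hP]; simp
  rw [MvPolynomial.coeff_sum] at hc
  simp only [MvPolynomial.coeff_monomial] at hc
  have hsum : ∑ σ : Equiv.Perm (Fin N), Φ ⇑σ
      = ∑ b : Fin N → Fin N, if (∑ i, Finsupp.single (b i) 1) = u₀ then Φ b else 0 := by
    rw [← Finset.sum_filter]
    apply Finset.sum_bij (fun (σ : Equiv.Perm (Fin N)) _ => ⇑σ)
    · intro σ _
      exact Finset.mem_filter.mpr ⟨Finset.mem_univ _, (hkey _).mpr σ.bijective⟩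
    · intro σ _ τ _ hst
      exact Equiv.coe_fn_injective hst
    · intro b hb
      have hbb := (hkey b).mp (Finset.mem_filter.mp hb).2
      exact ⟨Equiv.ofBijective b hbb, Finset.mem_univ _, rfl⟩
    · intros; rfl
  rw [hsum, hc]

/-- If the Christoffel symbols `Γ_{ij}^k` are smooth on a neighbourhood `U` of the
origin and satisfy the normal-system condition `Σ_{i,j} x_i x_j Γ_{ij}^k(x) = 0` on
`U`, then for every `m ≥ 0` the total symmetrization over the `m+2` covariant indices
of the `m`-th order partial derivatives at the origin vanishes. -/
theorem normal_system_symmetrized_derivatives_vanish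
    (n : ℕ) (U : Set (Fin n → ℝ)) (hU : IsOpen U) (h0 : (0 : Fin n → ℝ) ∈ U)
    (Γ : Fin n → Fin n → Fin n → (Fin n → ℝ) → ℝ)
    (hsmooth : ∀ i j k, ContDiffOn ℝ (⊤ : ℕ∞) (Γ i j k) U)
    (hnormal : ∀ x ∈ U, ∀ k, ∑ i, ∑ j, x i * x j * Γ i j k x = 0) :
    ∀ (m : ℕ) (k : Fin n) (a : Fin (m + 2) → Fin n),
      ∑ σ : Equiv.Perm (Fin (m + 2)),
        iteratedFDeriv ℝ m (Γ (a (σ 0)) (a (σ 1)) k) 0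
          (fun j : Fin m => Pi.single (a (σ j.succ.succ)) (1 : ℝ)) = 0 := by
  intro m k a
  classical
  obtain ⟨ε, hε, hball⟩ := Metric.isOpen_iff.mp hU 0 h0
  set c : ContDiffBump (0 : Fin n → ℝ) := ⟨ε/2, 3*ε/4, by linarith, by linarith⟩ with hc
  set G : Fin n → Fin n → (Fin n → ℝ) → ℝ := fun i j x => c x * Γ i j k x with hG
  have hmtop : (m : WithTop ℕ∞) ≤ ∞ := WithTop.coe_le_coe.mpr le_top
  have hGsmooth : ∀ i j, ContDiff ℝ ∞ (G i j) := by
    intro i j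
    rw [contDiff_iff_contDiffAt]
    intro x
    by_cases hx : x ∈ Metric.ball (0 : Fin n → ℝ) ε
    · exact c.contDiff.contDiffAt.mul
        (((hsmooth i j k).of_le (by simp)).contDiffAt (hU.mem_nhds (hball hx)))
    · have hmem : x ∈ (Metric.closedBall (0 : Fin n → ℝ) (3*ε/4))ᶜ := by
        simp only [Set.mem_compl_iff, Metric.mem_closedBall, not_le]
        simp only [Metric.mem_ball, not_lt] at hx
        linarith
      have hx' : G i j =ᶠ[nhds x] (fun _ => 0) := by
        filter_upwards [Metric.isClosed_closedBall.isOpen_compl.mem_nhds hmem] with y hy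
        simp only [Set.mem_compl_iff, Metric.mem_closedBall, not_le] at hy
        have hy' : c y = 0 := c.zero_of_le_dist hy.le
        simp [hG, hy']
      exact contDiffAt_const.congr_of_eventuallyEq hx'
  have hGeq : ∀ i j, Γ i j k =ᶠ[nhds (0 : Fin n → ℝ)] G i j := by
    intro i j
    filter_upwards [Metric.ball_mem_nhds (0 : Fin n → ℝ) (by linarith : (0:ℝ) < ε/2)] with y hy
    have hy' : c y = 1 := c.one_of_mem_closedBall (Metric.ball_subset_closedBall hy)
    simp [hG, hy']
  have hGnormal : ∀ x ∈ U, ∑ i, ∑ j, x i * x j * G i j x = 0 := by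
    intro x hx
    have h1 := hnormal x hx k
    calc ∑ i, ∑ j, x i * x j * G i j x
        = c x * ∑ i, ∑ j, x i * x j * Γ i j k x := by
          rw [Finset.mul_sum]
          refine Finset.sum_congr rfl fun i _ => ?_
          rw [Finset.mul_sum]
          refine Finset.sum_congr rfl fun j _ => ?_
          simp only [hG]; ring
      _ = 0 := by rw [h1, mul_zero]
  set Φ : (Fin (m+2) → Fin (m+2)) → ℝ := fun b =>
    iteratedFDeriv ℝ m (G (a (b 0)) (a (b 1))) 0
      (fun j : Fin m => Pi.single (a (b j.succ.succ)) (1:ℝ)) with hΦ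
  have hone : (1 : Fin (m+2)) = (0 : Fin (m+1)).succ := by
    ext; simp [Fin.val_one]
  have hconsΦ : ∀ (r s : Fin (m+2)) (g : Fin m → Fin (m+2)),
      Φ (Fin.cons r (Fin.cons s g)) =
        iteratedFDeriv ℝ m (G (a r) (a s)) 0 (fun j : Fin m => Pi.single (a (g j)) (1:ℝ)) := by
    intro r s g
    have e0 : (Fin.cons r (Fin.cons s g) : Fin (m+2) → Fin (m+2)) 0 = r := rfl
    have e1 : (Fin.cons r (Fin.cons s g) : Fin (m+2) → Fin (m+2)) 1 = s := by
      rw [hone, Fin.cons_succ, Fin.cons_zero]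
    have e2 : ∀ j : Fin m, (Fin.cons r (Fin.cons s g) : Fin (m+2) → Fin (m+2)) j.succ.succ = g j :=
      fun j => by rw [Fin.cons_succ, Fin.cons_succ]
    simp only [hΦ, e0, e1, e2]
  -- the diagonal identity
  have key : ∀ t : Fin (m+2) → ℝ,
      ∑ b : Fin (m+2) → Fin (m+2), (∏ i, t (b i)) * Φ b = 0 := by
    intro t
    set v : Fin n → ℝ := ∑ r, t r • (Pi.single (a r) (1:ℝ) : Fin n → ℝ) with hv
    set H : (Fin n → ℝ) → ℝ :=
      fun x => ∑ r : Fin (m+2), ∑ s : Fin (m+2), (t r * t s) • G (a r) (a s) x with hH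
    have hHsmooth : ContDiff ℝ ∞ H := by
      apply ContDiff.sum
      intro r _
      apply ContDiff.sum
      intro s _
      exact (hGsmooth _ _).const_smul _
    have hA : ∀ x, ∑ i, ∑ j, x i * x j * G i j x = 0 → True := fun _ _ => trivial
    set φ : ℝ → ℝ := fun s => H (s • v) with hφdef
    have hScont : Continuous fun s : ℝ => s • v := continuous_id.smul continuous_const
    have hSU : ∀ᶠ s in nhds (0:ℝ), (s • v) ∈ U := by
      have h1 : (0:ℝ) • v = 0 := zero_smul _ _
      have h2 : U ∈ nhds ((0:ℝ) • v) := by rw [h1]; exact hU.mem_nhds h0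
      exact hScont.continuousAt.eventually_mem h2
    have hφne : ∀ s : ℝ, s ≠ 0 → (s • v) ∈ U → φ s = 0 := by
      intro s hs hsU
      have h2 := hGnormal (s • v) hsU
      have h3 : ∑ i, ∑ j, (s • v) i * (s • v) j * G i j (s • v)
          = (s*s) * ∑ i, ∑ j, v i * v j * G i j (s • v) := by
        rw [Finset.mul_sum]
        refine Finset.sum_congr rfl fun i _ => ?_
        rw [Finset.mul_sum]
        refine Finset.sum_congr rfl fun j _ => ?_
        simp only [Pi.smul_apply, smul_eq_mul]
        ring
      have h4 : ∑ i, ∑ j, v i * v j * G i j (s • v) = φ s := by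
        rw [aux_collapse2 a t (fun i j => G i j (s • v)) v hv]
        simp only [hφdef, hH, smul_eq_mul]
      rw [h3, h4] at h2
      exact (mul_eq_zero.mp h2).resolve_left (mul_ne_zero hs hs)
    have hφ0 : φ 0 = 0 := by
      have hcont : ContinuousAt φ 0 := (hHsmooth.continuous.comp hScont).continuousAt
      have h1 : Filter.Tendsto φ (nhdsWithin (0:ℝ) {0}ᶜ) (nhds (φ 0)) :=
        hcont.tendsto.mono_left nhdsWithin_le_nhds
      have h2 : Filter.Tendsto φ (nhdsWithin (0:ℝ) {0}ᶜ) (nhds 0) := by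
        apply Filter.Tendsto.congr' _ tendsto_const_nhds
        have h3 : ∀ᶠ s in nhdsWithin (0:ℝ) {0}ᶜ, (s • v) ∈ U :=
          hSU.filter_mono nhdsWithin_le_nhds
        filter_upwards [h3, self_mem_nhdsWithin] with s hsU hs
        exact (hφne s hs hsU).symm
      exact tendsto_nhds_unique h1 h2
    have hφev : φ =ᶠ[nhds (0:ℝ)] fun _ => 0 := by
      filter_upwards [hSU] with s hs
      by_cases h : s = 0
      · rw [h]; exact hφ0
      · exact hφne s h hs
    set ℓ : ℝ →L[ℝ] (Fin n → ℝ) :=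
      ContinuousLinearMap.smulRight (ContinuousLinearMap.id ℝ ℝ) v with hℓ
    have hℓ0 : ℓ 0 = 0 := by simp
    have hℓ1 : ℓ 1 = v := by
      simp [hℓ, ContinuousLinearMap.smulRight_apply]
    have hφH : φ = H ∘ ℓ := by
      funext s
      simp [hφdef, hℓ]
    have hcomp := ContinuousLinearMap.iteratedFDeriv_comp_right ℓ
      (hHsmooth.of_le hmtop) (0:ℝ) (le_refl (m : WithTop ℕ∞))
    have hkeyC : iteratedFDeriv ℝ m H 0 (fun _ : Fin m => v) = 0 := by
      have h6 : iteratedFDeriv ℝ m (H ∘ ℓ) 0 (fun _ : Fin m => (1:ℝ))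
          = iteratedFDeriv ℝ m H 0 (fun _ : Fin m => v) := by
        rw [hcomp]
        simp [ContinuousMultilinearMap.compContinuousLinearMap_apply, hℓ0, hℓ1]
      rw [← h6, ← hφH, aux_iteratedFDeriv_zero_of_eventually hφev m]
      rfl
    -- expansion
    have hmulti : ∀ (F : ContinuousMultilinearMap ℝ (fun _ : Fin m => (Fin n → ℝ)) ℝ),
        F (fun _ => v) = ∑ g : Fin m → Fin (m+2),
          (∏ j, t (g j)) • F (fun j => Pi.single (a (g j)) (1:ℝ)) := by
      intro F
      have h1 : (fun _ : Fin m => v)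
          = fun j : Fin m => ∑ r : Fin (m+2), t r • (Pi.single (a r) (1:ℝ) : Fin n → ℝ) := by
        funext j; rw [hv]
      rw [h1]
      rw [F.map_sum]
      refine Finset.sum_congr rfl fun g _ => ?_
      exact F.map_smul_univ (fun j => t (g j)) (fun j => Pi.single (a (g j)) (1:ℝ))
    have hD1 : iteratedFDeriv ℝ m H 0
        = ∑ p : Fin (m+2) × Fin (m+2),
            iteratedFDeriv ℝ m ((t p.1 * t p.2) • G (a p.1) (a p.2)) 0 := by
      have hHeq : H = fun x => ∑ p : Fin (m+2) × Fin (m+2),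
          ((t p.1 * t p.2) • G (a p.1) (a p.2)) x := by
        funext x
        rw [hH, Fintype.sum_prod_type]
        rfl
      rw [hHeq]
      have hs : ∀ p ∈ (Finset.univ : Finset (Fin (m+2) × Fin (m+2))),
          ContDiff ℝ (m : WithTop ℕ∞) ((t p.1 * t p.2) • G (a p.1) (a p.2)) :=
        fun p _ => ((hGsmooth (a p.1) (a p.2)).const_smul (t p.1 * t p.2)).of_le hmtop
      have h7 := congrFun (iteratedFDeriv_sum hs) 0
      rw [Finset.sum_apply] at h7
      exact h7
    have hExp : iteratedFDeriv ℝ m H 0 (fun _ : Fin m => v)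
        = ∑ b : Fin (m+2) → Fin (m+2), (∏ i, t (b i)) * Φ b := by
      rw [hD1]
      rw [ContinuousMultilinearMap.sum_apply]
      have step1 : ∀ p : Fin (m+2) × Fin (m+2),
          iteratedFDeriv ℝ m ((t p.1 * t p.2) • G (a p.1) (a p.2)) 0 (fun _ : Fin m => v)
            = ∑ g : Fin m → Fin (m+2),
              (t p.1 * t p.2) * ((∏ j, t (g j)) *
                iteratedFDeriv ℝ m (G (a p.1) (a p.2)) 0
                  (fun j => Pi.single (a (g j)) (1:ℝ))) := by
        intro p
        rw [iteratedFDeriv_const_smul_apply (a := t p.1 * t p.2)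
          ((hGsmooth (a p.1) (a p.2)).of_le hmtop).contDiffAt]
        rw [ContinuousMultilinearMap.smul_apply, hmulti]
        rw [Finset.smul_sum]
        refine Finset.sum_congr rfl fun g _ => ?_
        simp [smul_eq_mul]
      simp only [step1]
      have hre := Fintype.sum_equiv
        ((Equiv.prodAssoc (Fin (m+2)) (Fin (m+2)) (Fin m → Fin (m+2))).trans
          ((Equiv.prodCongr (Equiv.refl (Fin (m+2))) (Fin.consEquiv fun _ => Fin (m+2))).trans
            (Fin.consEquiv fun _ => Fin (m+2))))
        (fun q : (Fin (m+2) × Fin (m+2)) × (Fin m → Fin (m+2)) =>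
          (t q.1.1 * t q.1.2) * ((∏ j, t (q.2 j)) *
            iteratedFDeriv ℝ m (G (a q.1.1) (a q.1.2)) 0
              (fun j => Pi.single (a (q.2 j)) (1:ℝ))))
        (fun b => (∏ i, t (b i)) * Φ b) ?_
      · rw [Fintype.sum_prod_type] at hre
        exact hre
      · rintro ⟨⟨r, s⟩, g⟩
        show (t r * t s) * ((∏ j, t (g j)) *
            iteratedFDeriv ℝ m (G (a r) (a s)) 0 (fun j => Pi.single (a (g j)) (1:ℝ)))
          = (∏ i, t ((Fin.cons r (Fin.cons s g) : Fin (m+2) → Fin (m+2)) i))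
              * Φ (Fin.cons r (Fin.cons s g))
        rw [hconsΦ, Fin.prod_univ_succ, Fin.prod_univ_succ]
        simp only [Fin.cons_succ, Fin.cons_zero]
        ring
    rw [← hExp, hkeyC]
  have hgoal : ∀ σ : Equiv.Perm (Fin (m+2)),
      iteratedFDeriv ℝ m (Γ (a (σ 0)) (a (σ 1)) k) 0
        (fun j : Fin m => Pi.single (a (σ j.succ.succ)) (1:ℝ)) = Φ ⇑σ := by
    intro σ
    rw [aux_iteratedFDeriv_congr_nhds (hGeq _ _) m]
  rw [Finset.sum_congr rfl (fun σ _ => hgoal σ)]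
  exact aux_perm_sum Φ key
end

section
/- Let V be a finite-dimensional real vector space and let p ≥ 0. For each permutation σ ∈ S_p, define the total contraction Φ_σ : (V*)^p × V^p → ℝ by Φ_σ(ω_1, …, ω_p, v_1, …, v_p) := ω_1(v_{σ(1)}) · ⋯ · ω_p(v_{σ(p)}). Then every map Φ : (V*)^p × V^p → ℝ that is ℝ-linear in each of its 2p arguments and GL(V)-invariant (i.e., Φ(ω_1 ∘ g⁻¹, …, ω_p ∘ g⁻¹, g v_1, …, g v_p) = Φ(ω_1, …, ω_p, v_1, …, v_p) for all g ∈ GL(V)) is a finite ℝ-linear combination of the maps Φ_σ, σ ∈ S_p. -/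
/-!
Fix a basis of `V`. A form `Φ` as in the statement is determined by its matrix `T`, indexed by
pairs of multi-indices, and `GL(V)`-invariance says that `T` commutes with every Kronecker power
`g^{⊗p}`, `g` invertible; since `A ↦ T * A^{⊗p} - A^{⊗p} * T` is polynomial in `A` and `A + t`
is invertible for all but finitely many `t`, `T` commutes with every `A^{⊗p}`.

By Ryser's formula for the permanent, the polarisations `∑_σ F_{σ 1} ⊗ ⋯ ⊗ F_{σ p}` lie in the
span of the `A^{⊗p}`, and averaging over `S_p` shows that every matrix commuting with the
permutations of tensor factors is such a combination. Hence `T` lies in the double commutant of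
the image of `S_p`, which by semisimplicity of `ℝ[S_p]` (Maschke) and the Jacobson density
theorem is the span of the permutation operators. The permutation operators are exactly the
matrices of the total contractions.
-/

open Finset

theorem Finset.sum_neg_one_pow_card_compl_of_subset {α R : Type*} [Fintype α] [DecidableEq α]
    [CommRing R] (T : Finset α) :
    ∑ S : Finset α, (if T ⊆ S then (-1 : R) ^ Sᶜ.card else 0) = if T = univ then 1 else 0 := by
  rw [← Fintype.sum_equiv (Equiv.mk compl compl compl_compl compl_compl)
    (fun U => if U ⊆ Tᶜ then (-1 : R) ^ U.card else 0) _ fun U => by simp [subset_compl_comm],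
    ← sum_filter, show univ.filter (· ⊆ Tᶜ) = Tᶜ.powerset by ext; simp]
  have := congr(($(sum_powerset_neg_one_pow_card (x := Tᶜ)) : R))
  push_cast at this
  simpa [compl_eq_empty_iff] using this

theorem Fintype.sum_surjective_eq_sum_perm {α M : Type*} [Fintype α] [DecidableEq α]
    [AddCommMonoid M] (g : (α → α) → M) :
    ∑ φ : α → α, (if Function.Surjective φ then g φ else 0) = ∑ σ : Equiv.Perm α, g σ := by
  rw [← sum_filter, Finset.sum_subtype (p := Function.Surjective) _ fun φ => by simp]
  exact Fintype.sum_equiv ((Equiv.subtypeEquivRight fun φ => Finite.surjective_iff_bijective).trans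
    Equiv.bijectiveEquiv) _ _ fun _ => rfl

theorem Matrix.permanent_eq_sum_neg_one_pow_prod_sum {n R : Type*} [Fintype n] [DecidableEq n]
    [CommRing R] (M : Matrix n n R) :
    M.permanent = ∑ S : Finset n, (-1) ^ Sᶜ.card * ∏ j, ∑ i ∈ S, M i j := by
  have hS (S : Finset n) : ∏ j, ∑ i ∈ S, M i j =
      ∑ φ : n → n, if univ.image φ ⊆ S then ∏ j, M (φ j) j else 0 := by
    rw [prod_univ_sum, ← sum_filter]
    congr 1
    ext φ
    simp [image_subset_iff]
  calc M.permanent = ∑ φ : n → n, if Function.Surjective φ then ∏ j, M (φ j) j else 0 :=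
        (Fintype.sum_surjective_eq_sum_perm fun φ => ∏ j, M (φ j) j).symm
    _ = ∑ φ : n → n, ∑ S : Finset n,
          (if univ.image φ ⊆ S then (-1 : R) ^ Sᶜ.card else 0) * ∏ j, M (φ j) j := by
        simp_rw [← sum_mul, sum_neg_one_pow_card_compl_of_subset, ite_mul, one_mul, zero_mul,
          ← coe_eq_univ, coe_image, coe_univ, Set.image_univ, Set.range_eq_univ]
    _ = ∑ S : Finset n, (-1) ^ Sᶜ.card * ∏ j, ∑ i ∈ S, M i j := by
        rw [sum_comm]
        refine sum_congr rfl fun S _ => ?_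
        rw [hS, mul_sum]
        refine sum_congr rfl fun φ _ => ?_
        split_ifs <;> simp

section DoubleCentralizer

open MonoidAlgebra

variable {k G V : Type*} [Field k] [Group G] [AddCommGroup V] [Module k V]

theorem Representation.asAlgebraHom_mem_span_range (ρ : Representation k G V) (r : k[G]) :
    ρ.asAlgebraHom r ∈ Submodule.span k (Set.range ρ) := by
  induction r using MonoidAlgebra.induction_on with
  | of g => exact Submodule.subset_span ⟨g, (ρ.asAlgebraHom_of g).symm⟩
  | add a b ha hb => rw [map_add]; exact add_mem ha hb
  | smul c a ha => rw [map_smul]; exact Submodule.smul_mem _ c ha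

theorem Representation.mem_span_range_of_mem_centralizer_centralizer [Finite G]
    [NeZero (Nat.card G : k)] [FiniteDimensional k V] (ρ : Representation k G V)
    {f : Module.End k V} (hf : f ∈ Set.centralizer (Set.centralizer (Set.range ρ))) :
    f ∈ Submodule.span k (Set.range ρ) := by
  let e := ρ.asModuleEquiv
  have : Module.Finite (Module.End k[G] ρ.asModule) ρ.asModule :=
    Module.Finite.of_restrictScalars_finite k _ _
  have hcomm (φ : Module.End k[G] ρ.asModule) :
      e.toLinearMap ∘ₗ φ.restrictScalars k ∘ₗ e.symm.toLinearMap ∈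
        Set.centralizer (Set.range ρ) := by
    rintro _ ⟨g, rfl⟩
    ext x
    simp only [Module.End.mul_apply, LinearMap.comp_apply, LinearMap.restrictScalars_apply,
      LinearEquiv.coe_coe, Representation.asModuleEquiv_symm_map_rho, φ.map_smul,
      Representation.asModuleEquiv_map_smul, Representation.asAlgebraHom_of, e]
  let F : Module.End (Module.End k[G] ρ.asModule) ρ.asModule :=
    { toFun := fun m => e.symm (f (e m))
      map_add' := by simp
      map_smul' := fun φ m => e.injective <| by
        simpa using (congr($(hf _ (hcomm φ)) (e m))).symm }
  -- Jacobson density; `ρ.asModule` is semisimple by Maschke's theorem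
  obtain ⟨r, hr⟩ := Module.Finite.toModuleEnd_moduleEnd_surjective F
  convert ρ.asAlgebraHom_mem_span_range r
  ext x
  calc f x = e (F (e.symm x)) := by simp [F]
    _ = e (r • e.symm x) := by rw [← hr]; rfl
    _ = ρ.asAlgebraHom r x := by simp [e]

end DoubleCentralizer

namespace Matrix

variable {κ ι R : Type*} [Fintype κ]

def piKronecker [CommSemiring R] (F : κ → Matrix ι ι R) : Matrix (κ → ι) (κ → ι) R :=
  of fun a b => ∏ j, F j (a j) (b j)

variable (κ) in
def kroneckerPow [CommSemiring R] (A : Matrix ι ι R) : Matrix (κ → ι) (κ → ι) R :=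
  piKronecker fun _ => A

theorem kroneckerPow_map {S : Type*} [CommSemiring R] [CommSemiring S] (f : R →+* S)
    (A : Matrix ι ι R) : (kroneckerPow κ A).map f = kroneckerPow κ (A.map f) := by
  ext a b
  simp [kroneckerPow, piKronecker]

theorem sum_piKronecker_comp_perm [DecidableEq κ] [CommRing R] (F : κ → Matrix ι ι R) :
    ∑ σ : Equiv.Perm κ, piKronecker (F ∘ σ) =
      ∑ S : Finset κ, (-1 : R) ^ Sᶜ.card • kroneckerPow κ (∑ i ∈ S, F i) := by
  ext a b
  simpa [piKronecker, kroneckerPow, Matrix.sum_apply, permanent] using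
    permanent_eq_sum_neg_one_pow_prod_sum (of fun i j => F i (a j) (b j))

theorem piKronecker_single [DecidableEq ι] [CommSemiring R] (a b : κ → ι) :
    piKronecker (fun j => single (a j) (b j) (1 : R)) = single a b 1 := by
  ext x y
  simp [piKronecker, single_apply, prod_ite_zero, funext_iff, forall_and]

variable [DecidableEq κ] [Fintype ι] [DecidableEq ι]

theorem sum_smul_single_comp_perm [CommSemiring R] {N : Matrix (κ → ι) (κ → ι) R}
    (hN : ∀ (σ : Equiv.Perm κ) a b, N (a ∘ σ) (b ∘ σ) = N a b) (σ : Equiv.Perm κ) :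
    ∑ a, ∑ b, N a b • single (a ∘ σ) (b ∘ σ) (1 : R) = N := by
  let e : (κ → ι) ≃ (κ → ι) := σ.symm.arrowCongr (Equiv.refl ι)
  have he (a : κ → ι) : e a = a ∘ σ := rfl
  let f (x y : κ → ι) := single x y (N x y)
  calc ∑ a, ∑ b, N a b • single (a ∘ σ) (b ∘ σ) (1 : R) = ∑ a, ∑ b, f (e a) (e b) := by
        simp [f, he, hN, smul_single]
    _ = ∑ x, ∑ y, f x y := by
        rw [Equiv.sum_comp e fun x => ∑ b, f x (e b)]
        simp only [Equiv.sum_comp]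
    _ = N := (matrix_eq_sum_single N).symm

theorem mem_span_range_kroneckerPow_of_forall_comp_perm [Field R] [CharZero R]
    {N : Matrix (κ → ι) (κ → ι) R} (hN : ∀ (σ : Equiv.Perm κ) a b, N (a ∘ σ) (b ∘ σ) = N a b) :
    N ∈ Submodule.span R (Set.range (kroneckerPow κ (ι := ι) (R := R))) := by
  have hsym : (Fintype.card (Equiv.Perm κ) : R) • N = ∑ a, ∑ b,
      N a b • ∑ σ : Equiv.Perm κ, piKronecker ((fun j => single (a j) (b j) (1 : R)) ∘ σ) := by
    calc (Fintype.card (Equiv.Perm κ) : R) • N = ∑ σ : Equiv.Perm κ, N := by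
          rw [sum_const, card_univ, Nat.cast_smul_eq_nsmul]
      _ = ∑ σ : Equiv.Perm κ, ∑ a, ∑ b, N a b • single (a ∘ σ) (b ∘ σ) (1 : R) :=
          sum_congr rfl fun σ _ => (sum_smul_single_comp_perm hN σ).symm
      _ = ∑ a, ∑ b, ∑ σ : Equiv.Perm κ, N a b • piKronecker
            ((fun j => single (a j) (b j) (1 : R)) ∘ σ) := by
          rw [sum_comm]
          exact sum_congr rfl fun a _ => sum_comm.trans <| sum_congr rfl fun b _ =>
            sum_congr rfl fun σ _ => by rw [← piKronecker_single (a ∘ σ) (b ∘ σ)]; rfl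
      _ = _ := by simp only [smul_sum]
  have hcard : (Fintype.card (Equiv.Perm κ) : R) ≠ 0 := Nat.cast_ne_zero.mpr Fintype.card_ne_zero
  rw [← inv_smul_smul₀ hcard N, hsym]
  refine Submodule.smul_mem _ _ (Submodule.sum_mem _ fun a _ => Submodule.sum_mem _ fun b _ =>
    Submodule.smul_mem _ _ ?_)
  rw [sum_piKronecker_comp_perm]
  exact Submodule.sum_mem _ fun S _ => Submodule.smul_mem _ _ (Submodule.subset_span ⟨_, rfl⟩)

open Polynomial in
theorem commute_kroneckerPow_of_forall_isUnit_det [Field R] [Infinite R]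
    {M : Matrix (κ → ι) (κ → ι) R}
    (h : ∀ A : Matrix ι ι R, IsUnit A.det → Commute M (kroneckerPow κ A)) (A : Matrix ι ι R) :
    Commute M (kroneckerPow κ A) := by
  have hA (t : R) : (-A).charmatrix.map (evalRingHom t) = scalar ι t + A := by
    ext i j
    rcases eq_or_ne i j with rfl | hij <;> simp [*]
  -- `P` is the commutator `[M, (X + A)^{⊗κ}]`, a matrix of polynomials in `X`
  let P := M.map C * kroneckerPow κ (-A).charmatrix - kroneckerPow κ (-A).charmatrix * M.map C
  have hP (t : R) : (evalRingHom t).mapMatrix P =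
      M * kroneckerPow κ (scalar ι t + A) - kroneckerPow κ (scalar ι t + A) * M := by
    have hM : (M.map C).map (evalRingHom t) = M := by ext; simp
    simp only [P, map_sub, map_mul, RingHom.mapMatrix_apply, kroneckerPow_map, hA, hM]
  have hP0 : P = 0 := by
    refine Matrix.ext fun a c => eq_zero_of_infinite_isRoot _
      ((finite_setOfPred_isRoot (charpoly_monic (-A)).ne_zero).infinite_compl.mono fun t ht => ?_)
    have hdet : IsUnit (scalar ι t + A).det := by
      simpa [eval_charpoly, isUnit_iff_ne_zero] using ht
    have := congr($(hP t) a c)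
    rw [(h _ hdet).eq, sub_self] at this
    simpa using this
  have h0 := hP 0
  rw [hP0, map_zero, map_zero, zero_add, eq_comm, sub_eq_zero] at h0
  exact h0

end Matrix

/-- The permutation action of `Equiv.Perm κ` on the coordinate vectors of `(ι → R)^{⊗κ}`. -/
def Representation.permTensor (R κ ι : Type*) [CommSemiring R] :
    Representation R (Equiv.Perm κ) ((κ → ι) → R) where
  toFun σ := LinearMap.funLeft R R (· ∘ σ)
  map_one' := rfl
  map_mul' _ _ := rfl

namespace Representation

variable {κ ι R : Type*}

@[simp]
theorem permTensor_apply [CommSemiring R] (σ : Equiv.Perm κ) (x : (κ → ι) → R) (a : κ → ι) :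
    permTensor R κ ι σ x a = x (a ∘ σ) := rfl

theorem permTensor_prod_repr [Fintype κ] [CommSemiring R] {V : Type*} [AddCommMonoid V]
    [Module R V] (B : Module.Basis ι R V) (v : κ → V) (σ : Equiv.Perm κ) :
    permTensor R κ ι σ (fun b => ∏ j, B.repr (v j) (b j)) =
      fun b => ∏ j, B.repr (v (σ⁻¹ j)) (b j) := by
  ext b
  rw [← Equiv.prod_comp σ fun j => B.repr (v (σ⁻¹ j)) (b j)]
  simp

variable [Fintype κ] [DecidableEq κ] [Fintype ι] [DecidableEq ι]

theorem toMatrix'_apply_comp_perm_of_mem_centralizer [CommSemiring R]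
    {g : Module.End R ((κ → ι) → R)} (hg : g ∈ Set.centralizer (Set.range (permTensor R κ ι)))
    (σ : Equiv.Perm κ) (a b : κ → ι) :
    LinearMap.toMatrix' g (a ∘ σ) (b ∘ σ) = LinearMap.toMatrix' g a b := by
  have hsingle : permTensor R κ ι σ (Pi.single (b ∘ σ) 1) = Pi.single b 1 := by
    ext c
    simp [Pi.single_apply, σ.surjective.injective_comp_right.eq_iff]
  simp only [LinearMap.toMatrix'_apply]
  rw [← permTensor_apply σ (g _) a, ← Module.End.mul_apply, hg _ ⟨σ, rfl⟩, Module.End.mul_apply,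
    hsingle]

end Representation

open Representation in
theorem Matrix.toLin'_mem_span_range_permTensor_of_forall_commute {κ ι R : Type*} [Fintype κ]
    [DecidableEq κ] [Fintype ι] [DecidableEq ι] [Field R] [CharZero R]
    {M : Matrix (κ → ι) (κ → ι) R} (hM : ∀ A : Matrix ι ι R, Commute M (kroneckerPow κ A)) :
    toLin' M ∈ Submodule.span R (Set.range (permTensor R κ ι)) := by
  refine mem_span_range_of_mem_centralizer_centralizer _ fun g hg => ?_
  have hspan : LinearMap.toMatrix' g ∈ (Subalgebra.centralizer R {M}).toSubmodule :=
    Submodule.span_le.mpr (by rintro _ ⟨A, rfl⟩ _ rfl; exact (hM A).eq)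
      (mem_span_range_kroneckerPow_of_forall_comp_perm
        (toMatrix'_apply_comp_perm_of_mem_centralizer hg))
  have := congr(toLin' $(hspan M rfl))
  rw [toLin'_mul, toLin'_mul, toLin'_toMatrix'] at this
  exact this.symm

theorem MultilinearMap.apply_eq_sum_prod_repr_smul {R M N κ ι : Type*} [CommSemiring R]
    [AddCommMonoid M] [Module R M] [AddCommMonoid N] [Module R N] [Fintype κ] [DecidableEq κ]
    [Fintype ι] (b : Module.Basis ι R M) (f : MultilinearMap R (fun _ : κ => M) N) (v : κ → M) :
    f v = ∑ a : κ → ι, (∏ j, b.repr (v j) (a j)) • f fun j => b (a j) := by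
  conv_lhs => rw [show v = fun j => ∑ x, b.repr (v j) x • b x from
    funext fun j => (b.sum_repr _).symm]
  rw [f.map_sum]
  simp_rw [f.map_smul_univ]

open Matrix in
theorem Module.Basis.prod_apply_dotProduct_prod_repr {R V κ ι : Type*} [CommRing R]
    [AddCommGroup V] [Module R V] [Fintype κ] [DecidableEq κ] [Fintype ι] (B : Module.Basis ι R V)
    (ω : κ → Module.Dual R V) (v : κ → V) :
    (fun a : κ → ι => ∏ i, ω i (B (a i))) ⬝ᵥ (fun a => ∏ i, B.repr (v i) (a i)) =
      ∏ i, ω i (v i) := by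
  simp_rw [dotProduct, ← prod_mul_distrib]
  rw [← Fintype.prod_sum fun i x => ω i (B x) * B.repr (v i) x]
  refine prod_congr rfl fun i _ => ?_
  calc ∑ x, ω i (B x) * B.repr (v i) x = ω i (∑ x, B.repr (v i) x • B x) := by
        simp only [map_sum, map_smul, smul_eq_mul, mul_comm]
    _ = ω i (v i) := by rw [B.sum_repr]

namespace MultilinearMap

open Matrix

variable {R V κ ι : Type*} [CommRing R] [AddCommGroup V] [Module R V] [Fintype κ] [DecidableEq κ]
  [Fintype ι] (B : Module.Basis ι R V)
  (F : MultilinearMap R (fun _ : κ => Module.Dual R V) (MultilinearMap R (fun _ : κ => V) R))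

noncomputable def tensorMatrix : Matrix (κ → ι) (κ → ι) R :=
  of fun a b => F (fun i => B.coord (a i)) fun j => B (b j)

theorem apply_eq_sum_prod_apply_basis_mul [DecidableEq ι] (ω : κ → Module.Dual R V) (v : κ → V) :
    F ω v = ∑ a : κ → ι, (∏ i, ω i (B (a i))) * F (fun i => B.coord (a i)) v := by
  rw [F.apply_eq_sum_prod_repr_smul B.dualBasis ω]
  simp

theorem apply_eq_sum_prod_repr_mul (ω : κ → Module.Dual R V) (v : κ → V) :
    F ω v = ∑ b : κ → ι, (∏ j, B.repr (v j) (b j)) * F ω fun j => B (b j) :=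
  (F ω).apply_eq_sum_prod_repr_smul B v

theorem apply_eq_dotProduct_tensorMatrix_mulVec [DecidableEq ι] (ω : κ → Module.Dual R V)
    (v : κ → V) :
    F ω v = (fun a => ∏ i, ω i (B (a i))) ⬝ᵥ
      (tensorMatrix B F *ᵥ fun b => ∏ j, B.repr (v j) (b j)) := by
  rw [apply_eq_sum_prod_apply_basis_mul B F ω, dotProduct]
  refine sum_congr rfl fun a _ => ?_
  rw [apply_eq_sum_prod_repr_mul B _ _ v, mulVec, dotProduct]
  exact congrArg _ (sum_congr rfl fun b _ => mul_comm _ _)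

theorem commute_tensorMatrix_kroneckerPow [DecidableEq ι]
    (hF : ∀ (g : V ≃ₗ[R] V) (ω : κ → Module.Dual R V) (v : κ → V),
      F (fun i => (ω i).comp (g.symm : V →ₗ[R] V)) (fun j => g (v j)) = F ω v)
    (g : V ≃ₗ[R] V) :
    Commute (tensorMatrix B F) (kroneckerPow κ (LinearMap.toMatrix B B g)) := by
  ext a c
  have hinv := hF g (fun i => (B.coord (a i)).comp (g : V →ₗ[R] V)) fun j => B (c j)
  simp only [LinearMap.comp_assoc, LinearEquiv.comp_symm, LinearMap.comp_id] at hinv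
  calc (tensorMatrix B F * kroneckerPow κ (LinearMap.toMatrix B B g)) a c
      = F (fun i => B.coord (a i)) (fun j => g (B (c j))) := by
        rw [apply_eq_sum_prod_repr_mul B]
        simp [mul_apply, tensorMatrix, kroneckerPow, piKronecker, LinearMap.toMatrix_apply,
          mul_comm]
    _ = F (fun i => (B.coord (a i)).comp (g : V →ₗ[R] V)) (fun j => B (c j)) := hinv
    _ = _ := by
        rw [apply_eq_sum_prod_apply_basis_mul B]
        simp [mul_apply, tensorMatrix, kroneckerPow, piKronecker, LinearMap.toMatrix_apply]

end MultilinearMap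

/-- Main theorem of invariant theory for `GL(V)`, case `p = q`: every
`GL(V)`-invariant multilinear map `(V*)^p × V^p → ℝ` is a linear combination of the
total contractions `Φ_σ(ω, v) = Π_i ω_i(v_{σ(i)})`, `σ ∈ S_p`. -/
theorem invariant_multilinear_map_eq_sum_total_contractions
    (V : Type*) [AddCommGroup V] [Module ℝ V] [FiniteDimensional ℝ V]
    (p : ℕ)
    (Φ : (Fin p → Module.Dual ℝ V) → (Fin p → V) → ℝ)
    (hadd₁ : ∀ (ω : Fin p → Module.Dual ℝ V) (v : Fin p → V) (i : Fin p)
        (a b : Module.Dual ℝ V),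
        Φ (Function.update ω i (a + b)) v
          = Φ (Function.update ω i a) v + Φ (Function.update ω i b) v)
    (hsmul₁ : ∀ (ω : Fin p → Module.Dual ℝ V) (v : Fin p → V) (i : Fin p)
        (c : ℝ) (a : Module.Dual ℝ V),
        Φ (Function.update ω i (c • a)) v = c * Φ (Function.update ω i a) v)
    (hadd₂ : ∀ (ω : Fin p → Module.Dual ℝ V) (v : Fin p → V) (j : Fin p) (a b : V),
        Φ ω (Function.update v j (a + b))
          = Φ ω (Function.update v j a) + Φ ω (Function.update v j b))
    (hsmul₂ : ∀ (ω : Fin p → Module.Dual ℝ V) (v : Fin p → V) (j : Fin p)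
        (c : ℝ) (a : V),
        Φ ω (Function.update v j (c • a)) = c * Φ ω (Function.update v j a))
    (hinv : ∀ (g : V ≃ₗ[ℝ] V) (ω : Fin p → Module.Dual ℝ V) (v : Fin p → V),
        Φ (fun i => (ω i).comp (g.symm : V →ₗ[ℝ] V)) (fun j => g (v j)) = Φ ω v) :
    ∃ c : Equiv.Perm (Fin p) → ℝ,
      ∀ ω v, Φ ω v = ∑ σ : Equiv.Perm (Fin p), c σ * ∏ i, ω i (v (σ i)) := by
  let F : MultilinearMap ℝ (fun _ : Fin p => Module.Dual ℝ V)
      (MultilinearMap ℝ (fun _ : Fin p => V) ℝ) :=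
    .mk' (fun ω => .mk' (Φ ω) (hadd₂ ω) (hsmul₂ ω))
      (fun ω i a b => by ext v; exact hadd₁ ω v i a b)
      (fun ω i c a => by ext v; exact hsmul₁ ω v i c a)
  let B := Module.finBasis ℝ V
  have hK : ∀ A, Commute (F.tensorMatrix B) (Matrix.kroneckerPow (Fin p) A) :=
    Matrix.commute_kroneckerPow_of_forall_isUnit_det fun A hA => by
      have := F.commute_tensorMatrix_kroneckerPow B hinv (Matrix.toLinearEquiv B A hA)
      rwa [show (Matrix.toLinearEquiv B A hA : V →ₗ[ℝ] V) = Matrix.toLin B B A from rfl,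
        LinearMap.toMatrix_toLin] at this
  obtain ⟨d, hd⟩ := (Submodule.mem_span_range_iff_exists_fun ℝ).mp
    (Matrix.toLin'_mem_span_range_permTensor_of_forall_commute hK)
  refine ⟨fun σ => d σ⁻¹, fun ω v => ?_⟩
  calc Φ ω v = _ := F.apply_eq_dotProduct_tensorMatrix_mulVec B ω v
    _ = ∑ σ, d σ * ∏ i, ω i (v (σ⁻¹ i)) := by
        rw [← Matrix.toLin'_apply, ← hd]
        simp [dotProduct_sum, Representation.permTensor_prod_repr,
          B.prod_apply_dotProduct_prod_repr]
    _ = _ := (Equiv.sum_comp (Equiv.inv _) _).symm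
end
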